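/- arXiv:1510.05355 — 2 statements merged into one kernel-verified Lean document; each statement's English description precedes it below -/
import Mathlib

section
/- Suppose d = gcd(q−1, k·e1 − e2) = 1. Then the map (a,b) ↦ c(a,b) from F_q × F_{q^k} to F_q^{q^k−1} is injective, and the multiset of Hamming weights {w_H(c(a,b)) : a ∈ F_q, b ∈ F_{q^k}} consists of: 0 with multiplicity 1; q^{k−1}(q−1) − 1 with multiplicity (q−1)(q^k−1); q^{k−1}(q−1) with multiplicity q^k−1; and q^k−1 with multiplicity q−1. In particular C is a three-weight code of length q^k−1 with q^{k+1} codewords and minimum distance q^{k−1}(q−1) − 1. -/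
/-!
Write `m = (q^k - 1)/(q - 1)`, so that `N(x) = x^m`. Dividing the `i`-th coordinate of `c(a,b)` by
the nonzero scalar `N(γ)^(e1 i) = γ^(m e1 i)` shows that it vanishes iff `Tr(b γ^(s i)) = -a`,
where `s = e2 - m e1`. Since `m ≡ k [MOD q - 1]`, the two gcd conditions make `s` coprime to
`q^k - 1 = (q - 1) m`, so `i ↦ γ^(s i)` enumerates `F_{q^k}^*`. For `b ≠ 0` the number of zero
coordinates is therefore the number of nonzero `x` with `Tr(b x) = -a`; the fibres of the
surjective map `x ↦ Tr(b x)` all have `q^(k-1)` elements, so this is `q^(k-1) - [a = 0]`.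
Every nonzero codeword thus has positive weight, which by linearity gives injectivity.
-/

open Finset

noncomputable section

attribute [local instance] Classical.propDecidable

variable (p : ℕ) {F E : Type*} [Field F] [Fintype F] [Field E] [Fintype E]
  [Algebra F E] [Algebra (ZMod p) F]

/-- The canonical additive character `χ(x) = ζ_p^{Tr_{q/p}(x)}` of `F`. -/
def chi (x : F) : ℂ :=
  Complex.exp (2 * (Real.pi : ℂ) * Complex.I *
    (((Algebra.trace (ZMod p) F) x).val : ℂ) / (p : ℂ))

/-- The Gauss sum `G(ψ, χ) = ∑_{x ∈ F^*} ψ(x) χ(x)` of a map `ψ : F → ℂ`. -/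
def gaussF (ψ : F → ℂ) : ℂ := ∑ x : Fˣ, ψ (x : F) * chi p (x : F)

/-- The exponential sum `T_{(e1,e2)}(a,b)`; here `x^{(q^k-1)/(q-1)}` is written as the
field norm of `x`. -/
def Tsum (e1 e2 : ℕ) (a : F) (b : E) : ℂ :=
  ∑ y : Fˣ, ∑ x : Eˣ,
    chi p ((y : F) * a * ((Algebra.norm F) (x : E)) ^ e1) *
    chi p ((Algebra.trace F E) ((algebraMap F E (y : F)) * b * (x : E) ^ e2))

/-- The `i`-th coordinate `a·γ^{((q^k-1)/(q-1))·e1·i} + Tr(b·γ^{e2·i})` of the codeword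
`c(a,b)`; here `γ^{(q^k-1)/(q-1)}` is written as the field norm of `γ`. -/
def coord (γ : Eˣ) (e1 e2 : ℕ) (a : F) (b : E) (i : ℕ) : F :=
  a * (Algebra.norm F) ((γ : E) ^ (e1 * i)) + (Algebra.trace F E) (b * (γ : E) ^ (e2 * i))

/-- The Hamming weight of the codeword `c(a,b)` of length `n`. -/
def wH (n : ℕ) (γ : Eˣ) (e1 e2 : ℕ) (a : F) (b : E) : ℕ :=
  ((Finset.range n).filter fun i => coord γ e1 e2 a b i ≠ 0).card

theorem AddMonoidHom.card_fiber_mul_card_of_surjective {G H : Type*} [AddGroup G] [AddGroup H]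
    [Fintype G] [Fintype H] [DecidableEq H] (f : G →+ H) (hf : Function.Surjective f) (y : H) :
    #{g | f g = y} * Fintype.card H = Fintype.card G := by
  have hfib : ∀ z : H, #{g | f g = z} = #{g | f g = y} := fun z =>
    AddMonoidHom.card_fiber_eq_of_mem_range f (hf z) (hf y)
  calc #{g | f g = y} * Fintype.card H = ∑ z : H, #{g | f g = z} := by
        rw [Finset.sum_congr rfl fun z _ => hfib z, Finset.sum_const, Finset.card_univ,
          smul_eq_mul, mul_comm]
    _ = Fintype.card G := (Finset.card_eq_sum_card_fiberwise fun g _ => mem_univ (f g)).symm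

theorem card_filter_units_eq_card_erase {G₀ : Type*} [GroupWithZero G₀] [Fintype G₀]
    (P : G₀ → Prop) :
    #{u : G₀ˣ | P u} = #((univ.filter P).erase 0) :=
  Finset.card_bij (fun u _ => (u : G₀)) (by simp)
    (fun _ _ _ _ => Units.ext)
    (fun x hx => ⟨Units.mk0 x (Finset.ne_of_mem_erase hx), by
      simpa using (Finset.mem_filter.1 (Finset.mem_of_mem_erase hx)).2, rfl⟩)

theorem card_filter_range_zpow_mul {G : Type*} [Group G] [Fintype G] {γ : G}
    (hγ : ∀ x, x ∈ Subgroup.zpowers γ) {s : ℤ} (hs : IsCoprime s (Fintype.card G))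
    (P : G → Prop) :
    #((range (Fintype.card G)).filter fun i : ℕ => P (γ ^ (s * i))) = #{x | P x} := by
  have hord : orderOf γ = Fintype.card G := by
    rw [orderOf_eq_card_of_forall_mem_zpowers hγ, Nat.card_eq_fintype_card]
  have hinj : Set.InjOn (fun i : ℕ => γ ^ (s * i)) (range (Fintype.card G)) := by
    intro i hi j hj hij
    have hdvd : (Fintype.card G : ℤ) ∣ s * i - s * j := by
      rw [← hord]; exact orderOf_dvd_sub_iff_zpow_eq_zpow.mpr hij
    rw [← mul_sub] at hdvd
    have := Int.eq_zero_of_abs_lt_dvd (hs.symm.dvd_of_dvd_mul_left hdvd)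
      (by simp only [coe_range, Set.mem_Iio] at hi hj; rw [abs_lt]; omega)
    omega
  have himage : (range (Fintype.card G)).image (fun i : ℕ => γ ^ (s * i)) = univ :=
    Finset.eq_univ_of_card _ (by rw [Finset.card_image_of_injOn hinj, card_range])
  rw [← himage, Finset.filter_image,
    Finset.card_image_of_injOn (hinj.mono (Finset.coe_subset.2 (Finset.filter_subset _ _)))]

theorem Multiset.map_univ_eq_cons_replicate {α β : Type*} [Fintype α] [DecidableEq α] [Zero α]
    (f : α → β) {x y : β} (h₀ : f 0 = x) (h : ∀ a ≠ 0, f a = y) :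
    (univ : Finset α).val.map f = x ::ₘ Multiset.replicate (Fintype.card α - 1) y := by
  rw [← Multiset.cons_erase (mem_univ_val (0 : α)), ← Finset.erase_val, Multiset.map_cons, h₀,
    Multiset.map_congr rfl fun a ha => h a (Finset.ne_of_mem_erase ha), Multiset.map_const',
    Finset.card_val, Finset.card_erase_of_mem (mem_univ _), Finset.card_univ]

theorem Multiset.map_univ_prod_eq_replicate {α β γ : Type*} [Fintype α] [DecidableEq α] [Zero α]
    [Fintype β] [DecidableEq β] [Zero β] (f : α × β → γ) {w₀₀ w₁₀ w₀₁ w₁₁ : γ}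
    (h₀₀ : f (0, 0) = w₀₀) (h₁₀ : ∀ a ≠ 0, f (a, 0) = w₁₀) (h₀₁ : ∀ b ≠ 0, f (0, b) = w₀₁)
    (h₁₁ : ∀ a ≠ 0, ∀ b ≠ 0, f (a, b) = w₁₁) :
    (univ : Finset (α × β)).val.map f =
      Multiset.replicate 1 w₀₀ +
      Multiset.replicate ((Fintype.card α - 1) * (Fintype.card β - 1)) w₁₁ +
      Multiset.replicate (Fintype.card β - 1) w₀₁ +
      Multiset.replicate (Fintype.card α - 1) w₁₀ := by
  rw [← Finset.univ_product_univ, Finset.product_val]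
  change ((univ : Finset α).val.bind fun a => (univ : Finset β).val.map (Prod.mk a)).map f = _
  rw [Multiset.map_bind, Multiset.bind, Multiset.map_congr rfl fun a _ => Multiset.map_map _ _ _,
    Multiset.map_univ_eq_cons_replicate (fun a => (univ : Finset β).val.map (f ∘ Prod.mk a))
      (Multiset.map_univ_eq_cons_replicate _ h₀₀ h₀₁)
      (fun a ha => Multiset.map_univ_eq_cons_replicate _ (h₁₀ a ha) (h₁₁ a ha)),
    Multiset.join_cons, Multiset.join, Multiset.sum_replicate]
  simp only [← Multiset.singleton_add, nsmul_add, Multiset.nsmul_singleton,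
    Multiset.nsmul_replicate, Multiset.replicate_one]
  abel

theorem isCoprime_sub_div_mul_pow_sub_one {q k e1 e2 : ℕ} (hq : 2 ≤ q)
    (h1 : Nat.gcd ((q ^ k - 1) / (q - 1)) e2 = 1)
    (hd : Int.gcd ((q : ℤ) - 1) ((k : ℤ) * e1 - e2) = 1) :
    IsCoprime ((e2 : ℤ) - ((q ^ k - 1) / (q - 1) : ℕ) * e1) ((q ^ k - 1 : ℕ) : ℤ) := by
  set m := (q ^ k - 1) / (q - 1)
  have hm : (m : ℤ) = ∑ j ∈ range k, (q : ℤ) ^ j := by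
    rw [show m = ∑ j ∈ range k, q ^ j from (Nat.geomSum_eq hq k).symm]; push_cast; rfl
  have hqk : ((q ^ k - 1 : ℕ) : ℤ) = m * ((q : ℤ) - 1) := by
    rw [hm, geom_sum_mul, Nat.cast_sub (Nat.one_le_pow _ _ (by omega))]; push_cast; rfl
  have hmk : (m : ℤ) ≡ k [ZMOD (q : ℤ) - 1] := by
    have := Int.ModEq.sum (s := range k) fun j _ => ((Int.modEq_sub (q : ℤ) 1).symm.pow j)
    simpa [hm] using this.symm
  have hcop_m : IsCoprime ((e2 : ℤ) - m * e1) m := by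
    have : IsCoprime (e2 : ℤ) m := by
      rw [Int.isCoprime_iff_gcd_eq_one, Int.gcd_natCast_natCast, Nat.gcd_comm]; exact h1
    simpa [sub_eq_add_neg] using this.add_mul_left_left (-(e1 : ℤ))
  have hcop_q : IsCoprime ((e2 : ℤ) - m * e1) ((q : ℤ) - 1) := by
    obtain ⟨t, ht⟩ := (Int.ModEq.dvd hmk.symm)
    have : IsCoprime ((e2 : ℤ) - k * e1) ((q : ℤ) - 1) := by
      rw [Int.isCoprime_iff_gcd_eq_one, Int.gcd_comm, ← Int.gcd_neg, neg_sub]; exact hd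
    have hs : (e2 : ℤ) - m * e1 = (e2 - k * e1) + ((q : ℤ) - 1) * (-t * e1) := by
      linear_combination (-(e1 : ℤ)) * ht
    rw [hs]
    exact this.add_mul_left_left _
  rw [hqk]
  exact hcop_m.mul_right hcop_q

theorem card_fiber_trace_mul_mul_card {b : E} (hb : b ≠ 0) (c : F) :
    #{x : E | Algebra.trace F E (b * x) = c} * Fintype.card F = Fintype.card E := by
  refine AddMonoidHom.card_fiber_mul_card_of_surjective
    ((Algebra.trace F E).comp (LinearMap.mulLeft F b)).toAddMonoidHom ?_ c
  exact (Algebra.trace_surjective F E).comp fun y => ⟨b⁻¹ * y, by simp [hb]⟩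

theorem coord_eq_zero_iff (γ : Eˣ) (e1 e2 : ℕ) (a : F) (b : E) (i : ℕ) :
    coord γ e1 e2 a b i = 0 ↔
      Algebra.trace F E (b * ↑(γ ^ (((e2 : ℤ) -
        ((Fintype.card E - 1) / (Fintype.card F - 1) : ℕ) * e1) * i))) = -a := by
  set m := (Fintype.card E - 1) / (Fintype.card F - 1)
  set u := Algebra.norm F ((γ : E) ^ (e1 * i))
  have hu : algebraMap F E u = ↑(γ ^ (m * (e1 * i))) := by
    rw [FiniteField.algebraMap_norm_eq_pow, Nat.card_eq_fintype_card, Nat.card_eq_fintype_card,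
      ← pow_mul, mul_comm, Units.val_pow_eq_pow_val]
  have hu0 : u ≠ 0 := fun h => (γ ^ (m * (e1 * i))).ne_zero (by rw [← hu, h, map_zero])
  have hunit : γ ^ (((e2 : ℤ) - m * e1) * i) = γ ^ (e2 * i) * (γ ^ (m * (e1 * i)))⁻¹ := by
    rw [← zpow_natCast, ← zpow_natCast, ← zpow_neg, ← zpow_add]; push_cast; ring_nf
  have htrace : Algebra.trace F E (b * ↑(γ ^ (((e2 : ℤ) - m * e1) * i))) =
      u⁻¹ * Algebra.trace F E (b * (γ : E) ^ (e2 * i)) := by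
    rw [← smul_eq_mul u⁻¹, ← map_smul, Algebra.smul_def, map_inv₀, hu, hunit]
    simp only [Units.val_mul, Units.val_inv_eq_inv_val, Units.val_pow_eq_pow_val]
    congr 1
    ring
  rw [htrace, inv_mul_eq_iff_eq_mul₀ hu0, coord, add_eq_zero_iff_eq_neg', mul_neg, mul_comm u]

theorem card_filter_coord_eq_zero {q k : ℕ} (hk : k ≠ 0) (hF : Fintype.card F = q)
    (hE : Fintype.card E = q ^ k) {γ : Eˣ} (hγ : ∀ x : Eˣ, x ∈ Subgroup.zpowers γ) {e1 e2 : ℕ}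
    (h1 : Nat.gcd ((q ^ k - 1) / (q - 1)) e2 = 1)
    (hd : Int.gcd ((q : ℤ) - 1) ((k : ℤ) * e1 - e2) = 1) (a : F) {b : E} (hb : b ≠ 0) :
    ((range (q ^ k - 1)).filter fun i => coord γ e1 e2 a b i = 0).card =
      if a = 0 then q ^ (k - 1) - 1 else q ^ (k - 1) := by
  have hq : 2 ≤ q := hF ▸ Fintype.one_lt_card
  have hunits : Fintype.card Eˣ = q ^ k - 1 := by rw [Fintype.card_units, hE]
  have hfiber : #{x : E | Algebra.trace F E (b * x) = -a} = q ^ (k - 1) := by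
    have := card_fiber_trace_mul_mul_card (F := F) hb (-a)
    rw [hF, hE, ← pow_sub_one_mul hk] at this
    exact Nat.eq_of_mul_eq_mul_right (by omega) this
  calc ((range (q ^ k - 1)).filter fun i => coord γ e1 e2 a b i = 0).card
      = ((range (Fintype.card Eˣ)).filter fun i : ℕ =>
          Algebra.trace F E (b * ↑(γ ^ (((e2 : ℤ) - ((q ^ k - 1) / (q - 1) : ℕ) * e1) * i)))
            = -a).card := by
        rw [hunits]
        refine congrArg card (filter_congr fun i _ => ?_)
        rw [coord_eq_zero_iff, hF, hE]
    _ = #{x : Eˣ | Algebra.trace F E (b * x) = -a} :=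
        card_filter_range_zpow_mul hγ
          (by rw [hunits]; exact isCoprime_sub_div_mul_pow_sub_one hq h1 hd)
          fun x => Algebra.trace F E (b * x) = -a
    _ = #((univ.filter fun x : E => Algebra.trace F E (b * x) = -a).erase 0) :=
        card_filter_units_eq_card_erase fun x => Algebra.trace F E (b * x) = -a
    _ = if a = 0 then q ^ (k - 1) - 1 else q ^ (k - 1) := by
        simp [card_erase_eq_ite, hfiber, eq_comm (a := (0 : F)), neg_eq_zero]

section Weight

variable {F E : Type*} [Field F] [Field E] [Algebra F E] (n : ℕ) (γ : Eˣ) (e1 e2 : ℕ)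

theorem coord_sub (a a' : F) (b b' : E) (i : ℕ) :
    coord γ e1 e2 (a - a') (b - b') i = coord γ e1 e2 a b i - coord γ e1 e2 a' b' i := by
  simp only [coord, sub_mul, map_sub]
  ring

theorem wH_add_card_filter_coord_eq_zero (a : F) (b : E) :
    wH n γ e1 e2 a b + ((range n).filter fun i => coord γ e1 e2 a b i = 0).card = n := by
  rw [wH, add_comm, Finset.card_filter_add_card_filter_not, card_range]

theorem wH_eq_zero_iff (a : F) (b : E) :
    wH n γ e1 e2 a b = 0 ↔ ∀ i < n, coord γ e1 e2 a b i = 0 := by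
  simp [wH, Finset.filter_eq_empty_iff]

theorem wH_zero_zero : wH n γ e1 e2 (0 : F) (0 : E) = 0 :=
  (wH_eq_zero_iff n γ e1 e2 _ _).2 fun i _ => by simp [coord]

theorem wH_zero_right [Fintype E] {a : F} (ha : a ≠ 0) : wH n γ e1 e2 a (0 : E) = n := by
  have hcoord : ∀ i, coord γ e1 e2 a (0 : E) i ≠ 0 := fun i => by
    simp [coord, ha, Algebra.norm_eq_zero_iff]
  rw [wH, Finset.filter_true_of_mem fun i _ => hcoord i, card_range]

end Weight

theorem wH_of_right_ne_zero {q k : ℕ} (hk : k ≠ 0) (hF : Fintype.card F = q)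
    (hE : Fintype.card E = q ^ k) {γ : Eˣ} (hγ : ∀ x : Eˣ, x ∈ Subgroup.zpowers γ) {e1 e2 : ℕ}
    (h1 : Nat.gcd ((q ^ k - 1) / (q - 1)) e2 = 1)
    (hd : Int.gcd ((q : ℤ) - 1) ((k : ℤ) * e1 - e2) = 1) (a : F) {b : E} (hb : b ≠ 0) :
    wH (q ^ k - 1) γ e1 e2 a b = q ^ (k - 1) * (q - 1) - if a = 0 then 0 else 1 := by
  have hsum := wH_add_card_filter_coord_eq_zero (q ^ k - 1) γ e1 e2 a b
  rw [card_filter_coord_eq_zero hk hF hE hγ h1 hd a hb] at hsum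
  have hpow : q ^ (k - 1) * q = q ^ k := pow_sub_one_mul hk q
  have hpos : 1 ≤ q ^ (k - 1) := Nat.one_le_pow _ _ (hF ▸ Fintype.card_pos)
  rw [Nat.mul_sub_one]
  split_ifs at hsum ⊢ <;> omega

theorem wH_ne_zero {q k : ℕ} (hk : 2 ≤ k) (hF : Fintype.card F = q)
    (hE : Fintype.card E = q ^ k) {γ : Eˣ} (hγ : ∀ x : Eˣ, x ∈ Subgroup.zpowers γ) {e1 e2 : ℕ}
    (h1 : Nat.gcd ((q ^ k - 1) / (q - 1)) e2 = 1)
    (hd : Int.gcd ((q : ℤ) - 1) ((k : ℤ) * e1 - e2) = 1) {ab : F × E} (hab : ab ≠ 0) :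
    wH (q ^ k - 1) γ e1 e2 ab.1 ab.2 ≠ 0 := by
  have hq : 2 ≤ q := hF ▸ Fintype.one_lt_card
  have hweight : 2 ≤ q ^ (k - 1) * (q - 1) :=
    Nat.mul_le_mul (Nat.le_self_pow (by omega) q |>.trans' hq) (by omega : 1 ≤ q - 1)
  obtain ⟨a, b⟩ := ab
  by_cases hb : b = 0
  · subst hb
    rw [wH_zero_right _ _ _ _ fun ha => hab (Prod.ext ha rfl)]
    have := Nat.one_lt_pow (by omega : k ≠ 0) hq
    omega
  · rw [wH_of_right_ne_zero (by omega) hF hE hγ h1 hd a hb]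
    split_ifs <;> omega

theorem statement_3_general
    (k q : ℕ) (hk : 2 ≤ k)
    (F E : Type*) [Field F] [Fintype F] [Field E] [Fintype E]
    [Algebra F E]
    (hF : Fintype.card F = q) (hE : Fintype.card E = q ^ k)
    (γ : Eˣ) (hγ : ∀ x : Eˣ, x ∈ Subgroup.zpowers γ)
    (e1 e2 : ℕ)
    (h1 : Nat.gcd ((q ^ k - 1) / (q - 1)) e2 = 1)
    (hd : Int.gcd ((q : ℤ) - 1) ((k : ℤ) * e1 - e2) = 1) :
    Function.Injective
      (fun ab : F × E => fun i : Fin (q ^ k - 1) => coord γ e1 e2 ab.1 ab.2 (i : ℕ)) ∧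
    Multiset.map (fun ab : F × E => wH (q ^ k - 1) γ e1 e2 ab.1 ab.2)
        (Finset.univ : Finset (F × E)).val =
      Multiset.replicate 1 0 +
      Multiset.replicate ((q - 1) * (q ^ k - 1)) (q ^ (k - 1) * (q - 1) - 1) +
      Multiset.replicate (q ^ k - 1) (q ^ (k - 1) * (q - 1)) +
      Multiset.replicate (q - 1) (q ^ k - 1) := by
  have hk0 : k ≠ 0 := by omega
  have hweight := wH_of_right_ne_zero hk0 hF hE hγ h1 hd
  refine ⟨fun ab ab' h => sub_eq_zero.1 ?_, ?_⟩
  · by_contra hne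
    exact wH_ne_zero hk hF hE hγ h1 hd hne <| (wH_eq_zero_iff _ _ _ _ _ _).2 fun i hi => by
      rw [Prod.fst_sub, Prod.snd_sub, coord_sub, sub_eq_zero]; exact congrFun h ⟨i, hi⟩
  · rw [Multiset.map_univ_prod_eq_replicate (w₀₁ := q ^ (k - 1) * (q - 1))
      (w₁₁ := q ^ (k - 1) * (q - 1) - 1) _ (wH_zero_zero _ _ _ _)
      (fun a ha => wH_zero_right _ _ _ _ ha) (fun b hb => (hweight 0 hb).trans (by simp))
      (fun a ha b hb => (hweight a hb).trans (by simp [ha])), hF, hE]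

theorem statement_3
    (p e k q : ℕ) (hp : p.Prime) (he : 0 < e) (hk : 2 ≤ k) (hq : q = p ^ e)
    (F E : Type*) [Field F] [Fintype F] [Field E] [Fintype E]
    [Algebra F E] [Algebra (ZMod p) F]
    (hF : Fintype.card F = q) (hE : Fintype.card E = q ^ k)
    (γ : Eˣ) (hγ : ∀ x : Eˣ, x ∈ Subgroup.zpowers γ)
    (e1 e2 : ℕ) (he1 : 0 < e1) (he2 : 0 < e2)
    (h1 : Nat.gcd ((q ^ k - 1) / (q - 1)) e2 = 1)
    (h2 : Nat.gcd (q - 1) (Nat.gcd e1 e2) = 1)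
    (hd : Int.gcd ((q : ℤ) - 1) ((k : ℤ) * e1 - e2) = 1) :
    Function.Injective
      (fun ab : F × E => fun i : Fin (q ^ k - 1) => coord γ e1 e2 ab.1 ab.2 (i : ℕ)) ∧
    Multiset.map (fun ab : F × E => wH (q ^ k - 1) γ e1 e2 ab.1 ab.2)
        (Finset.univ : Finset (F × E)).val =
      Multiset.replicate 1 0 +
      Multiset.replicate ((q - 1) * (q ^ k - 1)) (q ^ (k - 1) * (q - 1) - 1) +
      Multiset.replicate (q ^ k - 1) (q ^ (k - 1) * (q - 1)) +
      Multiset.replicate (q - 1) (q ^ k - 1) :=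
  statement_3_general k q hk F E hF hE γ hγ e1 e2 h1 hd
end
end

section
/- Suppose d = gcd(q−1, k·e1 − e2) > 1. Then there exist a ∈ F_q^* and b ∈ F_{q^k}^* with w_H(c(a,b)) < q^{k−1}(q−1) − 1; consequently, the minimum distance h of C satisfies h ≤ q^{k−1}(q−1) − 2 and ∑_{i=0}^{k} ⌈h/q^i⌉ < q^k − 1, so C does not meet the Griesmer bound. -/
open Finset

noncomputable section

attribute [local instance] Classical.propDecidable

variable (p : ℕ) {F E : Type*} [Field F] [Fintype F] [Field E] [Fintype E]
  [Algebra F E] [Algebra (ZMod p) F]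

/-! The norm `E → F` is `x ↦ x ^ m` with `m = (q^k - 1)/(q - 1) ≡ k [MOD d]`, so
`d ∣ m e1 - e2` and, for `s = (q^k - 1)/d`, `γ^(e2 s) = N(γ^(e1 s)) =: C ∈ F^*`. Hence
coordinate `i + s` of `c(a,b)` is `C` times coordinate `i`: the zero set of every codeword is
`s`-periodic and its size is divisible by `d`. On the other hand each coordinate vanishes for
exactly `(q-1) q^(k-1)` of the pairs `(a,b) ∈ F^* × E^*`, so the number of zeros averages to
`q^(k-1)`. As `d ∤ q^(k-1)`, some codeword has more than `q^(k-1)` zeros, i.e. weight below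
`q^(k-1)(q-1) - 1`. The Griesmer sum of any `h ≤ q^(k-1)(q-1) - 2` is at most
`h + q^(k-1) ≤ q^k - 2`. -/

theorem sum_range_ceil_div_pow_le (q t h : ℕ) (hq : 0 < q) (hh : h ≤ q ^ t * (q - 1)) :
    ∑ i ∈ range (t + 2), ⌈(h : ℚ) / (q : ℚ) ^ i⌉ ≤ h + q ^ t := by
  have hhQ : (h : ℚ) ≤ (q : ℚ) ^ t * ((q : ℚ) - 1) := by
    have := (Nat.cast_le (α := ℚ)).mpr hh
    push_cast [Nat.cast_sub hq] at this
    exact this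
  have hmid : ∀ i ∈ range t,
      ⌈(h : ℚ) / (q : ℚ) ^ (i + 1)⌉ ≤ (q : ℤ) ^ (t - 1 - i) * ((q : ℤ) - 1) := by
    intro i hi
    have hti : t - 1 - i + (i + 1) = t := by have := mem_range.mp hi; omega
    rw [Int.ceil_le, div_le_iff₀ (by positivity)]
    push_cast
    rwa [mul_right_comm, ← pow_add, hti]
  have hlast : ⌈(h : ℚ) / (q : ℚ) ^ (t + 1)⌉ ≤ 1 := by
    rw [Int.ceil_le, div_le_iff₀ (by positivity), Int.cast_one, one_mul, pow_succ]
    exact hhQ.trans (by gcongr; linarith)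
  have hgeom :
      ∑ i ∈ range t, (q : ℤ) ^ (t - 1 - i) * ((q : ℤ) - 1) = (q : ℤ) ^ t - 1 := by
    rw [← sum_mul, Finset.sum_range_reflect (fun i => (q : ℤ) ^ i) t, geom_sum_mul]
  calc ∑ i ∈ range (t + 2), ⌈(h : ℚ) / (q : ℚ) ^ i⌉
      = ⌈(h : ℚ)⌉ + ∑ i ∈ range t, ⌈(h : ℚ) / (q : ℚ) ^ (i + 1)⌉
          + ⌈(h : ℚ) / (q : ℚ) ^ (t + 1)⌉ := by
        rw [sum_range_succ, sum_range_succ', pow_zero, div_one]; ring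
    _ ≤ h + ((q : ℤ) ^ t - 1) + 1 := by
        rw [Int.ceil_natCast, ← hgeom]
        exact add_le_add (add_le_add le_rfl (sum_le_sum hmid)) hlast
    _ = h + q ^ t := by ring

theorem sum_range_ceil_div_pow_lt (q t h : ℕ) (hq : 0 < q) (hh : h + 2 ≤ q ^ t * (q - 1)) :
    ∑ i ∈ range (t + 2), ⌈(h : ℚ) / (q : ℚ) ^ i⌉ < (q : ℤ) ^ (t + 1) - 1 := by
  have hhZ : (h : ℤ) + 2 ≤ (q : ℤ) ^ t * ((q : ℤ) - 1) := by
    have := (Nat.cast_le (α := ℤ)).mpr hh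
    push_cast [Nat.cast_sub hq] at this
    exact this
  calc ∑ i ∈ range (t + 2), ⌈(h : ℚ) / (q : ℚ) ^ i⌉ ≤ h + q ^ t :=
        sum_range_ceil_div_pow_le q t h hq (by omega)
    _ < (q : ℤ) ^ (t + 1) - 1 := by rw [pow_succ]; linarith

section Congruences

variable {q d : ℕ}

theorem natCast_pow_sub_one_div_sub_one (hq : 2 ≤ q) (hqd : (q : ZMod d) = 1) (k : ℕ) :
    (((q ^ k - 1) / (q - 1) : ℕ) : ZMod d) = k := by
  rw [← Nat.geomSum_eq hq]
  push_cast
  simp [hqd]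

theorem dvd_pow_sub_one_of_natCast_eq_one (hq : 1 ≤ q) (hqd : (q : ZMod d) = 1) (k : ℕ) :
    d ∣ q ^ k - 1 := by
  rw [← ZMod.natCast_eq_zero_iff, Nat.cast_sub (Nat.one_le_pow _ _ hq)]
  simp [hqd]

theorem not_dvd_pow_of_natCast_eq_one (hd : 1 < d) (hqd : (q : ZMod d) = 1) (j : ℕ) :
    ¬d ∣ q ^ j := by
  have : Fact (1 < d) := ⟨hd⟩
  rw [← ZMod.natCast_eq_zero_iff]
  simp [hqd]

end Congruences

theorem Nat.count_mul_of_periodic {P : ℕ → Prop} [DecidablePred P] {s : ℕ}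
    (hP : Function.Periodic P s) (d : ℕ) : Nat.count P (d * s) = d * Nat.count P s := by
  induction d with
  | zero => simp
  | succ d ih =>
    have hshift : (fun i => P (d * s + i)) = P :=
      funext fun i => by rw [add_comm]; exact hP.nat_mul d i
    rw [add_mul, one_mul, Nat.count_add, ih, add_one_mul]
    simp_rw [hshift]

section Code

variable {K L : Type*} [Field K] [Field L] [Algebra K L]

theorem wH_add_count_coord_eq_zero (n : ℕ) (γ : Lˣ) (e1 e2 : ℕ) (a : K) (b : L) :
    wH n γ e1 e2 a b + Nat.count (fun i => coord γ e1 e2 a b i = 0) n = n := by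
  rw [wH, Nat.count_eq_card_filter_range, add_comm]
  convert card_filter_add_card_filter_not (s := range n) (fun i => coord γ e1 e2 a b i = 0)
  simp

theorem coord_add_of_pow_eq (γ : Lˣ) {e1 e2 s : ℕ}
    (hs : (γ : L) ^ (e2 * s) = algebraMap K L (Algebra.norm K ((γ : L) ^ (e1 * s))))
    (a : K) (b : L) (i : ℕ) :
    coord γ e1 e2 a b (i + s) = Algebra.norm K ((γ : L) ^ (e1 * s)) * coord γ e1 e2 a b i := by
  have htr : b * ((γ : L) ^ (e2 * i) * (γ : L) ^ (e2 * s))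
      = Algebra.norm K ((γ : L) ^ (e1 * s)) • (b * (γ : L) ^ (e2 * i)) := by
    rw [hs, Algebra.smul_def]; ring
  simp only [coord, mul_add, pow_add, map_mul, htr, map_smul, smul_eq_mul]
  ring

variable [Fintype L]

theorem dvd_count_coord_eq_zero (γ : Lˣ) {e1 e2 s : ℕ}
    (hs : (γ : L) ^ (e2 * s) = algebraMap K L (Algebra.norm K ((γ : L) ^ (e1 * s))))
    (a : K) (b : L) (d : ℕ) : d ∣ Nat.count (fun i => coord γ e1 e2 a b i = 0) (d * s) := by
  have : Module.Finite K L := Module.Finite.of_finite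
  have hper : Function.Periodic (fun i => coord γ e1 e2 a b i = 0) s := fun i => by
    simp [coord_add_of_pow_eq γ hs]
  rw [Nat.count_mul_of_periodic hper]
  exact dvd_mul_right _ _

variable [Fintype K]

theorem pow_mul_eq_algebraMap_norm (γ : Lˣ) {e1 e2 d s : ℕ} (hs : Fintype.card L - 1 = d * s)
    (he : e2 ≡ e1 * ((Fintype.card L - 1) / (Fintype.card K - 1)) [MOD d]) :
    (γ : L) ^ (e2 * s) = algebraMap K L (Algebra.norm K ((γ : L) ^ (e1 * s))) := by
  rw [FiniteField.algebraMap_norm_eq_pow, ← pow_mul, Nat.card_eq_fintype_card,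
    Nat.card_eq_fintype_card, ← Units.val_pow_eq_pow_val, ← Units.val_pow_eq_pow_val]
  congr 1
  refine pow_eq_pow_iff_modEq.mpr (Nat.ModEq.of_dvd ?_ ((he.mul_right' s).trans ?_))
  · rw [← hs, ← Fintype.card_units]
    exact orderOf_dvd_card
  · rw [mul_right_comm]

theorem card_filter_trace_mul_eq {v : L} (hv : v ≠ 0) (c : K) :
    #{b : L | Algebra.trace K L (b * v) = c} = Fintype.card K ^ (Module.finrank K L - 1) := by
  have : Module.Finite K L := Module.Finite.of_finite
  let f : L →+ K := (Algebra.trace K L).toAddMonoidHom.comp (AddMonoidHom.mulRight v)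
  have hf : Function.Surjective f := fun c => by
    obtain ⟨x, hx⟩ := Algebra.trace_surjective K L c
    exact ⟨x * v⁻¹, by simp [f, hv, hx]⟩
  have hsum : Fintype.card L = ∑ c' : K, #{b | f b = c'} := by
    rw [← card_univ]
    exact card_eq_sum_card_fiberwise fun _ _ => mem_univ _
  have hcard : Fintype.card K * #{b | f b = c} = Fintype.card K ^ Module.finrank K L := by
    rw [← Module.card_eq_pow_finrank, hsum, sum_congr rfl fun c' _ =>
      AddMonoidHom.card_fiber_eq_of_mem_range f (hf c') (hf c), sum_const, card_univ, smul_eq_mul]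
  rw [← Nat.sub_add_cancel Module.finrank_pos, pow_succ'] at hcard
  exact Nat.eq_of_mul_eq_mul_left Fintype.card_pos hcard

theorem card_filter_mul_add_trace_mul_eq_zero {u : K} (hu : u ≠ 0) {v : L} (hv : v ≠ 0) :
    #{x ∈ (univ.erase (0 : K)) ×ˢ (univ.erase (0 : L)) |
        x.1 * u + Algebra.trace K L (x.2 * v) = 0}
      = (Fintype.card K - 1) * Fintype.card K ^ (Module.finrank K L - 1) := by
  have hfiber : ∀ a ∈ univ.erase (0 : K),
      ∑ b ∈ univ.erase (0 : L), (if a * u + Algebra.trace K L (b * v) = 0 then 1 else 0)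
        = Fintype.card K ^ (Module.finrank K L - 1) := by
    intro a ha
    rw [sum_erase _ (by simp [ne_of_mem_erase ha, hu]), ← card_filter,
      ← card_filter_trace_mul_eq hv (-(a * u))]
    congr 1
    ext b
    simp [add_eq_zero_iff_eq_neg']
  rw [card_filter, sum_product, sum_congr rfl hfiber, sum_const, card_erase_of_mem (mem_univ _),
    card_univ, smul_eq_mul]

theorem exists_pow_le_count_coord_eq_zero (γ : Lˣ) (e1 e2 : ℕ) :
    ∃ a : K, ∃ b : L, a ≠ 0 ∧ b ≠ 0 ∧ Fintype.card K ^ (Module.finrank K L - 1) ≤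
      Nat.count (fun i => coord γ e1 e2 a b i = 0) (Fintype.card L - 1) := by
  set S := (univ.erase (0 : K)) ×ˢ (univ.erase (0 : L))
  set n := Fintype.card L - 1
  have hS : #S = (Fintype.card K - 1) * n := by
    simp [S, n, card_product, card_erase_of_mem]
  have hdouble : ∑ x ∈ S, Nat.count (fun i => coord γ e1 e2 x.1 x.2 i = 0) n
      = ∑ i ∈ range n, #{x ∈ S | coord γ e1 e2 x.1 x.2 i = 0} := by
    simp_rw [Nat.count_eq_card_filter_range]
    exact sum_card_bipartiteAbove_eq_sum_card_bipartiteBelow _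
  have hcolumn : ∀ i, #{x ∈ S | coord γ e1 e2 x.1 x.2 i = 0}
      = (Fintype.card K - 1) * Fintype.card K ^ (Module.finrank K L - 1) := fun i =>
    card_filter_mul_add_trace_mul_eq_zero (by simp) (pow_ne_zero _ γ.ne_zero)
  have hsum : ∑ _x ∈ S, Fintype.card K ^ (Module.finrank K L - 1)
      ≤ ∑ x ∈ S, Nat.count (fun i => coord γ e1 e2 x.1 x.2 i = 0) n := by
    rw [sum_const, hdouble, sum_congr rfl fun i _ => hcolumn i, sum_const, card_range, hS,
      smul_eq_mul, smul_eq_mul, mul_right_comm, mul_comm n]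
  obtain ⟨x, hxS, hx⟩ := exists_le_of_sum_le ⟨(1, 1), by simp [S]⟩ hsum
  simp only [S, mem_product, mem_erase] at hxS
  exact ⟨x.1, x.2, hxS.1.1, hxS.2.1, hx⟩

theorem exists_wH_lt_of_natCast_eq_one (γ : Lˣ) {e1 e2 d : ℕ} (hd : 1 < d)
    (hKd : (Fintype.card K : ZMod d) = 1) (he : (Module.finrank K L * e1 : ZMod d) = e2) :
    ∃ a : K, ∃ b : L, a ≠ 0 ∧ b ≠ 0 ∧ wH (Fintype.card L - 1) γ e1 e2 a b <
      Fintype.card K ^ (Module.finrank K L - 1) * (Fintype.card K - 1) - 1 := by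
  have : Module.Finite K L := Module.Finite.of_finite
  obtain ⟨a, b, ha, hb, hle⟩ := exists_pow_le_count_coord_eq_zero (K := K) γ e1 e2
  have hsum := wH_add_count_coord_eq_zero (Fintype.card L - 1) γ e1 e2 a b
  set q := Fintype.card K
  set r := Module.finrank K L
  have hq : 2 ≤ q := Fintype.one_lt_card
  have hr : 0 < r := Module.finrank_pos
  have hL : Fintype.card L = q ^ r := Module.card_eq_pow_finrank
  have hed : e2 ≡ e1 * ((Fintype.card L - 1) / (q - 1)) [MOD d] := by
    rw [← ZMod.natCast_eq_natCast_iff, Nat.cast_mul, hL, natCast_pow_sub_one_div_sub_one hq hKd,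
      mul_comm, he]
  obtain ⟨s, hs⟩ := hL ▸ dvd_pow_sub_one_of_natCast_eq_one (by omega) hKd r
  have hdvd := hs ▸ dvd_count_coord_eq_zero γ (pow_mul_eq_algebraMap_norm γ hs hed) a b d
  have hne : Nat.count (fun i => coord γ e1 e2 a b i = 0) (Fintype.card L - 1) ≠ q ^ (r - 1) :=
    fun h => not_dvd_pow_of_natCast_eq_one hd hKd _ (h ▸ hdvd)
  have hpow : q ^ r = q ^ (r - 1) * (q - 1) + q ^ (r - 1) := by
    rw [← Nat.sub_add_cancel hr, pow_succ, Nat.add_sub_cancel, Nat.mul_sub_one,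
      Nat.sub_add_cancel (Nat.le_mul_of_pos_right _ (by omega))]
  exact ⟨a, b, ha, hb, by omega⟩

end Code

theorem statement_5_general
    (k q : ℕ)
    (F E : Type*) [Field F] [Fintype F] [Field E] [Fintype E]
    [Algebra F E]
    (hF : Fintype.card F = q) (hE : Fintype.card E = q ^ k)
    (γ : Eˣ)
    (e1 e2 d : ℕ)
    (hd : Int.gcd ((q : ℤ) - 1) ((k : ℤ) * e1 - e2) = d) (hd1 : 1 < d) :
    (∃ a : F, ∃ b : E, a ≠ 0 ∧ b ≠ 0 ∧
      wH (q ^ k - 1) γ e1 e2 a b < q ^ (k - 1) * (q - 1) - 1) ∧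
    ∀ h : ℕ,
      IsLeast {w : ℕ | ∃ a : F, ∃ b : E, ¬(a = 0 ∧ b = 0) ∧ wH (q ^ k - 1) γ e1 e2 a b = w} h →
      h ≤ q ^ (k - 1) * (q - 1) - 2 ∧
      ∑ i ∈ Finset.range (k + 1), ⌈(h : ℚ) / (q : ℚ) ^ i⌉ < (q : ℤ) ^ k - 1 := by
  have : Module.Finite F E := .of_finite
  have hq : 2 ≤ q := hF ▸ Fintype.one_lt_card
  have hk : Module.finrank F E = k := by
    have := Module.card_eq_pow_finrank (K := F) (V := E)
    rw [hF, hE] at this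
    exact Nat.pow_right_injective hq this.symm
  have hqd : ((q - 1 : ℤ) : ZMod d) = 0 :=
    (ZMod.intCast_zmod_eq_zero_iff_dvd _ d).mpr (hd ▸ Int.gcd_dvd_left _ _)
  have hked : ((k * e1 - e2 : ℤ) : ZMod d) = 0 :=
    (ZMod.intCast_zmod_eq_zero_iff_dvd _ d).mpr (hd ▸ Int.gcd_dvd_right _ _)
  push_cast at hqd hked
  have hweight := exists_wH_lt_of_natCast_eq_one (K := F) γ hd1 (hF ▸ sub_eq_zero.mp hqd)
    (hk ▸ sub_eq_zero.mp hked)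
  rw [hF, hE, hk] at hweight
  refine ⟨hweight, fun h hh => ?_⟩
  obtain ⟨a, b, ha, hb, hw⟩ := hweight
  have hle : h + 2 ≤ q ^ (k - 1) * (q - 1) := by
    have := hh.2 ⟨a, b, by tauto, rfl⟩
    omega
  obtain ⟨t, rfl⟩ : ∃ t, k = t + 1 :=
    ⟨k - 1, by have := hk ▸ Module.finrank_pos (R := F) (M := E); omega⟩
  rw [Nat.add_sub_cancel] at hle ⊢
  exact ⟨by omega, sum_range_ceil_div_pow_lt q t h (by omega) hle⟩

theorem statement_5
    (p e k q : ℕ) (hp : p.Prime) (he : 0 < e) (hk : 2 ≤ k) (hq : q = p ^ e)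
    (F E : Type*) [Field F] [Fintype F] [Field E] [Fintype E]
    [Algebra F E] [Algebra (ZMod p) F]
    (hF : Fintype.card F = q) (hE : Fintype.card E = q ^ k)
    (γ : Eˣ) (hγ : ∀ x : Eˣ, x ∈ Subgroup.zpowers γ)
    (e1 e2 d : ℕ) (he1 : 0 < e1) (he2 : 0 < e2)
    (h1 : Nat.gcd ((q ^ k - 1) / (q - 1)) e2 = 1)
    (h2 : Nat.gcd (q - 1) (Nat.gcd e1 e2) = 1)
    (hd : Int.gcd ((q : ℤ) - 1) ((k : ℤ) * e1 - e2) = d) (hd1 : 1 < d) :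
    (∃ a : F, ∃ b : E, a ≠ 0 ∧ b ≠ 0 ∧
      wH (q ^ k - 1) γ e1 e2 a b < q ^ (k - 1) * (q - 1) - 1) ∧
    ∀ h : ℕ,
      IsLeast {w : ℕ | ∃ a : F, ∃ b : E, ¬(a = 0 ∧ b = 0) ∧ wH (q ^ k - 1) γ e1 e2 a b = w} h →
      h ≤ q ^ (k - 1) * (q - 1) - 2 ∧
      ∑ i ∈ Finset.range (k + 1), ⌈(h : ℚ) / (q : ℚ) ^ i⌉ < (q : ℤ) ^ k - 1 :=
  statement_5_general k q F E hF hE γ e1 e2 d hd hd1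
end
end
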